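/- arXiv:2002.10730 — 4 statements merged into one kernel-verified Lean document; each statement's English description precedes it below -/
import Mathlib

section
/- For a smooth compactly supported function f : ℝ³ → ℝ, and for u = (u₁, 0, 0) with u₁ ∈ ℝ, the (k−1)-st partial derivative of P₁f(u, w) with respect to w₁ equals the (k−1)-st partial derivative of P_k f(u, w) with respect to u₁, i.e. ∂_{w₁}^{k−1} P₁ f(u, w) = ∂_{u₁}^{k−1} P_k f(u, w). -/
open MeasureTheory Metric Set Filter Real

noncomputable section

/-- Points of three-dimensional Euclidean space given by coordinates. -/
def pt (a b c : ℝ) : EuclideanSpace ℝ (Fin 3) :=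
  (WithLp.equiv 2 (Fin 3 → ℝ)).symm ![a, b, c]

/-- The weighted ray transform `P_k f(u, w) = ∫₀^∞ f(u + r w) r^k dr`. -/
def rayT (k : ℕ) (f : EuclideanSpace ℝ (Fin 3) → ℝ)
    (u w : EuclideanSpace ℝ (Fin 3)) : ℝ :=
  ∫ r in Set.Ioi (0:ℝ), f (u + r • w) * r ^ k

/-- The simplex `K = {x ∈ [0,1]³ : x₁ + x₂ + x₃ ≤ 1}`. -/
def simplexK : Set (EuclideanSpace ℝ (Fin 3)) :=
  {x | (∀ i, x i ∈ Set.Icc (0:ℝ) 1) ∧ x 0 + x 1 + x 2 ≤ 1}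

/-- The triple line vertex set `Ξ = Ξ₁ ∪ Ξ₂ ∪ Ξ₃`. -/
def Xi : Set (EuclideanSpace ℝ (Fin 3)) :=
  {y | ∃ t ∈ Set.Icc (0:ℝ) 1, y = pt t 0 0} ∪
  {y | ∃ t ∈ Set.Icc (0:ℝ) 1, y = pt 0 t 0} ∪
  {y | ∃ t ∈ Set.Icc (0:ℝ) 1, y = pt 0 0 t}

/-- The conical Radon transform, defined via the circle-integral (coarea)
interpretation of the delta-function definition. -/
def conicalT (k : ℕ) (f : EuclideanSpace ℝ (Fin 3) → ℝ)
    (u β : EuclideanSpace ℝ (Fin 3)) (s : ℝ) : ℝ :=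
  (Real.sqrt (1 - s^2))⁻¹ *
    ∫ α in {α : EuclideanSpace ℝ (Fin 3) | ‖α‖ = 1 ∧ (inner ℝ α β : ℝ) = s},
      rayT k f u α ∂(μH[1])

abbrev E3 := EuclideanSpace ℝ (Fin 3)

lemma pt_self (w : E3) : pt (w 0) (w 1) (w 2) = w := by
  ext i; fin_cases i <;> rfl

lemma pt_decomp (t b c : ℝ) : pt t b c = pt 0 b c + t • pt 1 0 0 := by
  ext i; fin_cases i <;> simp [pt, PiLp.add_apply, PiLp.smul_apply]

lemma pt_smul (t : ℝ) : pt t 0 0 = t • pt 1 0 0 := by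
  ext i; fin_cases i <;> simp [pt, PiLp.smul_apply]

lemma pt_e_ne : pt 1 0 0 ≠ (0 : E3) := by
  intro h
  have h0 : pt 1 0 0 0 = (0 : E3) 0 := by rw [h]
  simp [pt] at h0

lemma integral_const_mul_pow_Ioi (c : ℝ) (k : ℕ) (hk : 1 ≤ k) :
    ∫ r in Ioi (0:ℝ), c * r ^ k = 0 := by
  rcases eq_or_ne c 0 with rfl | hc
  · simp
  · apply integral_undef
    intro h
    have h' : IntegrableOn (fun r => c * r ^ k) (Ioi (0:ℝ)) := h
    have h1 : IntegrableOn (fun r => c * r ^ k) (Ioi (max 1 |c|⁻¹)) :=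
      h'.mono_set (Ioi_subset_Ioi (le_max_of_le_left zero_le_one))
    have hc0 : 0 < |c| := abs_pos.mpr hc
    have h2 : IntegrableOn (fun _ : ℝ => (1:ℝ)) (Ioi (max 1 |c|⁻¹)) := by
      apply Integrable.mono' h1.norm aestronglyMeasurable_const
      filter_upwards [ae_restrict_mem measurableSet_Ioi] with r hr
      have hr1 : (1:ℝ) ≤ r := le_trans (le_max_left _ _) hr.le
      have hrc : |c|⁻¹ ≤ r := le_trans (le_max_right _ _) hr.le
      have hone : 1 ≤ |c| * r := by
        calc (1:ℝ) = |c| * |c|⁻¹ := by field_simp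
        _ ≤ |c| * r := by exact mul_le_mul_of_nonneg_left hrc hc0.le
      have hpow : r ≤ r ^ k := le_self_pow₀ hr1 (by omega)
      calc ‖(1:ℝ)‖ = 1 := norm_one
        _ ≤ |c| * r := hone
        _ ≤ |c| * r ^ k := mul_le_mul_of_nonneg_left hpow hc0.le
        _ = ‖c * r ^ k‖ := by
            rw [norm_mul, Real.norm_eq_abs, Real.norm_eq_abs, abs_pow,
              abs_of_nonneg (by linarith : (0:ℝ) ≤ r)]
    have h3 := integrable_const_iff.mp h2
    rcases h3 with h3 | h3
    · norm_num at h3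
    have h4 := h3.measure_univ_lt_top
    simp [Real.volume_Ioi, Measure.restrict_apply_univ] at h4

lemma iterate_deriv_zero (m : ℕ) (x : ℝ) : deriv^[m] (fun _ : ℝ => (0:ℝ)) x = 0 := by
  induction m generalizing x with
  | zero => rfl
  | succ n ih =>
    rw [Function.iterate_succ_apply,
      show deriv (fun _ : ℝ => (0:ℝ)) = fun _ : ℝ => (0:ℝ) from funext fun y => deriv_const y 0]
    exact ih x

open Topology

def Dm (e : E3) : ℕ → (E3 → ℝ) → E3 → ℝ
  | 0, g => g
  | m + 1, g => fun x => fderiv ℝ (Dm e m g) x e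

lemma Dm_contDiff (e : E3) (m : ℕ) (g : E3 → ℝ) (hg : ContDiff ℝ (⊤ : ℕ∞) g) :
    ContDiff ℝ (⊤ : ℕ∞) (Dm e m g) := by
  induction m with
  | zero => exact hg
  | succ n ih =>
    exact (ih.fderiv_right ((by simp))).clm_apply contDiff_const

lemma Dm_hcs (e : E3) (m : ℕ) (g : E3 → ℝ) (hcs : HasCompactSupport g) :
    HasCompactSupport (Dm e m g) := by
  induction m with
  | zero => exact hcs
  | succ n ih => exact ih.fderiv_apply ℝ e

set_option maxHeartbeats 1000000 in
lemma core (g : E3 → ℝ) (hg : ContDiff ℝ (⊤ : ℕ∞) g) (hcs : HasCompactSupport g)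
    (c a v e : E3) (j : ℕ) (t₀ : ℝ) (hnd : v + t₀ • e ≠ 0) :
    HasDerivAt (fun t : ℝ => ∫ r in Ioi (0:ℝ), g ((c + r • v) + t • (a + r • e)) * r ^ j)
      (∫ r in Ioi (0:ℝ), (fderiv ℝ g ((c + r • v) + t₀ • (a + r • e))) (a + r • e) * r ^ j)
      t₀ := by
  obtain ⟨R₀, hR₀⟩ := hcs.isBounded.subset_closedBall 0
  set R : ℝ := max R₀ 0 with hRdef
  have hR : tsupport g ⊆ closedBall 0 R :=
    hR₀.trans (closedBall_subset_closedBall (le_max_left _ _))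
  obtain ⟨M, hM⟩ := (hcs.fderiv ℝ).exists_bound_of_continuous (hg.continuous_fderiv (by simp))
  have hMpos : 0 ≤ M := le_trans (norm_nonneg _) (hM 0)
  obtain ⟨M₀, hM₀⟩ := hcs.exists_bound_of_continuous hg.continuous
  set c₀ : ℝ := ‖v + t₀ • e‖ with hc₀def
  have hc₀ : 0 < c₀ := norm_pos_iff.mpr hnd
  set ε : ℝ := min 1 (c₀ / (2 * (‖e‖ + 1))) with hεdef
  have hε : 0 < ε := lt_min one_pos (by positivity)
  have hdir : ∀ x ∈ ball t₀ ε, c₀ / 2 ≤ ‖v + x • e‖ := by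
    intro x hx
    have hxt : |x - t₀| < ε := by rwa [mem_ball, Real.dist_eq] at hx
    have hsub : ‖(v + t₀ • e) - (v + x • e)‖ = |t₀ - x| * ‖e‖ := by
      rw [show (v + t₀ • e) - (v + x • e) = (t₀ - x) • e by module, norm_smul,
        Real.norm_eq_abs]
    have htri : c₀ - ‖(v + t₀ • e) - (v + x • e)‖ ≤ ‖v + x • e‖ := by
      have := norm_sub_norm_le (v + t₀ • e) (v + x • e)
      linarith
    have habs : |t₀ - x| < ε := by rwa [abs_sub_comm]
    have hεe : ε * ‖e‖ ≤ c₀ / 2 := by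
      have h1 : ε ≤ c₀ / (2 * (‖e‖ + 1)) := min_le_right _ _
      have h2 : (0:ℝ) ≤ ‖e‖ := norm_nonneg _
      have h3 : ε * ‖e‖ ≤ c₀ / (2 * (‖e‖ + 1)) * ‖e‖ := by nlinarith
      have h4 : c₀ / (2 * (‖e‖ + 1)) * ‖e‖ ≤ c₀ / 2 := by
        rw [div_mul_eq_mul_div, div_le_div_iff₀ (by positivity) (by positivity)]
        nlinarith
      linarith
    have : |t₀ - x| * ‖e‖ ≤ c₀ / 2 := by
      have h2 : (0:ℝ) ≤ ‖e‖ := norm_nonneg _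
      nlinarith
    rw [hsub] at htri; linarith
  set B : ℝ := ‖c‖ + (|t₀| + 1) * ‖a‖ with hBdef
  have hBpos : 0 ≤ B := by positivity
  have hcb : ∀ x ∈ ball t₀ ε, ‖c + x • a‖ ≤ B := by
    intro x hx
    have hxt : |x - t₀| < ε := by rwa [mem_ball, Real.dist_eq] at hx
    have hxa : |x| ≤ |t₀| + 1 := by
      have : |x| - |t₀| ≤ |x - t₀| := by
        have := abs_sub_abs_le_abs_sub x t₀; linarith
      have hε1 : ε ≤ 1 := min_le_left _ _
      linarith
    calc ‖c + x • a‖ ≤ ‖c‖ + ‖x • a‖ := norm_add_le _ _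
      _ = ‖c‖ + |x| * ‖a‖ := by rw [norm_smul, Real.norm_eq_abs]
      _ ≤ B := by
          have := norm_nonneg a
          rw [hBdef]; nlinarith
  set Rm : ℝ := 2 * (R + B) / c₀ with hRmdef
  have harg : ∀ (x r : ℝ), (c + r • v) + x • (a + r • e) = (c + x • a) + r • (v + x • e) := by
    intro x r; module
  have hvanish : ∀ x ∈ ball t₀ ε, ∀ r : ℝ, 0 < r → Rm < r →
      ((c + r • v) + x • (a + r • e)) ∉ tsupport g := by
    intro x hx r hr hrR hmem
    have h1 : ‖(c + r • v) + x • (a + r • e)‖ ≤ R := by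
      have := hR hmem; rwa [mem_closedBall, dist_zero_right] at this
    rw [harg] at h1
    have h2 : ‖r • (v + x • e)‖ - ‖c + x • a‖ ≤ ‖(c + x • a) + r • (v + x • e)‖ := by
      have h3 := norm_sub_le ((c + x • a) + r • (v + x • e)) (c + x • a)
      rw [add_sub_cancel_left] at h3
      linarith
    have h4 : r * (c₀ / 2) ≤ ‖r • (v + x • e)‖ := by
      rw [norm_smul, Real.norm_eq_abs, abs_of_pos hr]
      exact mul_le_mul_of_nonneg_left (hdir x hx) hr.le
    have h5 := hcb x hx
    have h6 : r * (c₀ / 2) ≤ R + B := by linarith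
    have h7 : Rm * (c₀ / 2) = R + B := by rw [hRmdef]; field_simp
    nlinarith

  have hcont_arg : ∀ x : ℝ, Continuous (fun r : ℝ => (c + r • v) + x • (a + r • e)) := by
    intro x; fun_prop
  have hF_meas : ∀ᶠ x in 𝓝 t₀, AEStronglyMeasurable
      (fun r : ℝ => g ((c + r • v) + x • (a + r • e)) * r ^ j) (volume.restrict (Ioi 0)) := by
    apply Eventually.of_forall
    intro x
    exact ((hg.continuous.comp (hcont_arg x)).mul (continuous_pow j)).aestronglyMeasurable
  have hIoc_int : ∀ (h : ℝ → ℝ), Continuous h →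
      Integrable (indicator (Ioc (0:ℝ) Rm) h) (volume.restrict (Ioi 0)) := by
    intro h hh
    rw [integrable_indicator_iff measurableSet_Ioc]
    have h1 : IntegrableOn h (Ioc 0 Rm) volume := hh.integrableOn_Ioc
    rw [IntegrableOn, Measure.restrict_restrict measurableSet_Ioc]
    exact h1.mono_set inter_subset_left
  have hF_int : Integrable (fun r : ℝ => g ((c + r • v) + t₀ • (a + r • e)) * r ^ j)
      (volume.restrict (Ioi 0)) := by
    apply Integrable.mono' (hIoc_int (fun r => M₀ * r ^ j) (by fun_prop))
    · exact ((hg.continuous.comp (hcont_arg t₀)).mul (continuous_pow j)).aestronglyMeasurable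
    · filter_upwards [ae_restrict_mem measurableSet_Ioi] with r hr
      have hr0 : (0:ℝ) < r := hr
      by_cases hrm : r ≤ Rm
      · rw [indicator_of_mem (mem_Ioc.mpr ⟨hr0, hrm⟩)]
        rw [norm_mul, norm_pow, Real.norm_eq_abs r, abs_of_pos hr0]
        exact mul_le_mul_of_nonneg_right (hM₀ _) (by positivity)
      · rw [indicator_of_notMem (fun hmem => hrm hmem.2)]
        have hv := hvanish t₀ (mem_ball_self hε) r hr0 (not_le.mp hrm)
        rw [image_eq_zero_of_notMem_tsupport hv]
        simp
  have hF'_meas : AEStronglyMeasurable (fun r : ℝ =>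
      (fderiv ℝ g ((c + r • v) + t₀ • (a + r • e))) (a + r • e) * r ^ j)
      (volume.restrict (Ioi 0)) := by
    apply Continuous.aestronglyMeasurable
    have h1 : Continuous (fun r : ℝ => fderiv ℝ g ((c + r • v) + t₀ • (a + r • e))) :=
      (hg.continuous_fderiv (by simp)).comp (hcont_arg t₀)
    have h2 : Continuous (fun r : ℝ => a + r • e) := by fun_prop
    exact (h1.clm_apply h2).mul (continuous_pow j)
  set bound : ℝ → ℝ := indicator (Ioc (0:ℝ) Rm) (fun r => M * (‖a‖ + ‖e‖ * r) * r ^ j)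
    with hbdef
  have hbound_int : Integrable bound (volume.restrict (Ioi 0)) := hIoc_int _ (by fun_prop)
  have h_bound : ∀ᵐ r ∂(volume.restrict (Ioi (0:ℝ))), ∀ x ∈ ball t₀ ε,
      ‖(fderiv ℝ g ((c + r • v) + x • (a + r • e))) (a + r • e) * r ^ j‖ ≤ bound r := by
    filter_upwards [ae_restrict_mem measurableSet_Ioi] with r hr x hx
    have hr0 : (0:ℝ) < r := hr
    by_cases hrm : r ≤ Rm
    · rw [hbdef, indicator_of_mem (mem_Ioc.mpr ⟨hr0, hrm⟩)]
      rw [norm_mul, norm_pow, Real.norm_eq_abs r, abs_of_pos hr0]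
      apply mul_le_mul_of_nonneg_right _ (by positivity)
      calc ‖(fderiv ℝ g ((c + r • v) + x • (a + r • e))) (a + r • e)‖
          ≤ ‖fderiv ℝ g ((c + r • v) + x • (a + r • e))‖ * ‖a + r • e‖ :=
            ContinuousLinearMap.le_opNorm _ _
        _ ≤ M * (‖a‖ + ‖e‖ * r) := by
            apply mul_le_mul (hM _) _ (norm_nonneg _) hMpos
            calc ‖a + r • e‖ ≤ ‖a‖ + ‖r • e‖ := norm_add_le _ _
              _ = ‖a‖ + ‖e‖ * r := by
                  rw [norm_smul, Real.norm_eq_abs, abs_of_pos hr0]; ring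
    · rw [hbdef, indicator_of_notMem (fun hmem => hrm hmem.2)]
      rw [fderiv_of_notMem_tsupport ℝ (hvanish x hx r hr0 (not_le.mp hrm))]
      simp
  have h_diff : ∀ᵐ r ∂(volume.restrict (Ioi (0:ℝ))), ∀ x ∈ ball t₀ ε,
      HasDerivAt (fun x : ℝ => g ((c + r • v) + x • (a + r • e)) * r ^ j)
        ((fderiv ℝ g ((c + r • v) + x • (a + r • e))) (a + r • e) * r ^ j) x := by
    apply Eventually.of_forall
    intro r x hx
    have h1 : HasDerivAt (fun x : ℝ => (c + r • v) + x • (a + r • e)) (a + r • e) x := by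
      simpa using ((hasDerivAt_id x).smul_const (a + r • e)).const_add (c + r • v)
    have h2 := ((hg.differentiable (by simp)) _).hasFDerivAt.comp_hasDerivAt x h1
    exact h2.mul_const (r ^ j)
  exact (hasDerivAt_integral_of_dominated_loc_of_deriv_le
    (F := fun x r => g ((c + r • v) + x • (a + r • e)) * r ^ j)
    (F' := fun x r => (fderiv ℝ g ((c + r • v) + x • (a + r • e))) (a + r • e) * r ^ j)
    (bound := bound) (ball_mem_nhds t₀ hε) hF_meas hF_int hF'_meas h_bound hbound_int h_diff).2

lemma coreW (g : E3 → ℝ) (hg : ContDiff ℝ (⊤ : ℕ∞) g) (hcs : HasCompactSupport g)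
    (c v e : E3) (j : ℕ) (t₀ : ℝ) (hnd : v + t₀ • e ≠ 0) :
    HasDerivAt (fun t : ℝ => ∫ r in Ioi (0:ℝ), g (c + r • (v + t • e)) * r ^ j)
      (∫ r in Ioi (0:ℝ), (fderiv ℝ g (c + r • (v + t₀ • e))) e * r ^ (j + 1)) t₀ := by
  have h := core g hg hcs c 0 v e j t₀ hnd
  have e1 : (fun t : ℝ => ∫ r in Ioi (0:ℝ), g ((c + r • v) + t • ((0:E3) + r • e)) * r ^ j)
      = fun t : ℝ => ∫ r in Ioi (0:ℝ), g (c + r • (v + t • e)) * r ^ j := by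
    funext t; congr 1; funext r
    congr 2
    module
  have e2 : (∫ r in Ioi (0:ℝ),
        (fderiv ℝ g ((c + r • v) + t₀ • ((0:E3) + r • e))) ((0:E3) + r • e) * r ^ j)
      = ∫ r in Ioi (0:ℝ), (fderiv ℝ g (c + r • (v + t₀ • e))) e * r ^ (j + 1) := by
    congr 1; funext r
    have harg : (c + r • v) + t₀ • ((0:E3) + r • e) = c + r • (v + t₀ • e) := by module
    rw [harg, zero_add, ContinuousLinearMap.map_smul, smul_eq_mul, pow_succ]
    ring
  rw [e1, e2] at h
  exact h

lemma coreU (g : E3 → ℝ) (hg : ContDiff ℝ (⊤ : ℕ∞) g) (hcs : HasCompactSupport g)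
    (c a v : E3) (j : ℕ) (t₀ : ℝ) (hnd : v ≠ 0) :
    HasDerivAt (fun t : ℝ => ∫ r in Ioi (0:ℝ), g ((c + t • a) + r • v) * r ^ j)
      (∫ r in Ioi (0:ℝ), (fderiv ℝ g ((c + t₀ • a) + r • v)) a * r ^ j) t₀ := by
  have h := core g hg hcs c a v 0 j t₀ (by simpa using hnd)
  have e1 : (fun t : ℝ => ∫ r in Ioi (0:ℝ), g ((c + r • v) + t • (a + r • (0:E3))) * r ^ j)
      = fun t : ℝ => ∫ r in Ioi (0:ℝ), g ((c + t • a) + r • v) * r ^ j := by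
    funext t; congr 1; funext r
    congr 2
    module
  have e2 : (∫ r in Ioi (0:ℝ),
        (fderiv ℝ g ((c + r • v) + t₀ • (a + r • (0:E3)))) (a + r • (0:E3)) * r ^ j)
      = ∫ r in Ioi (0:ℝ), (fderiv ℝ g ((c + t₀ • a) + r • v)) a * r ^ j := by
    congr 1; funext r
    have harg : (c + r • v) + t₀ • (a + r • (0:E3)) = (c + t₀ • a) + r • v := by module
    have ha : a + r • (0:E3) = a := by module
    rw [harg, ha]
  rw [e1, e2] at h
  exact h

lemma iterW (g : E3 → ℝ) (hg : ContDiff ℝ (⊤ : ℕ∞) g) (hcs : HasCompactSupport g)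
    (c v e : E3) (j : ℕ) (m : ℕ) :
    ∀ t : ℝ, v + t • e ≠ 0 →
      deriv^[m] (fun t : ℝ => ∫ r in Ioi (0:ℝ), g (c + r • (v + t • e)) * r ^ j) t
        = ∫ r in Ioi (0:ℝ), Dm e m g (c + r • (v + t • e)) * r ^ (j + m) := by
  induction m with
  | zero => intro t ht; simp [Dm]
  | succ n ih =>
    intro t ht
    rw [Function.iterate_succ_apply']
    have hopen : IsOpen {s : ℝ | v + s • e ≠ 0} := by
      have : Continuous (fun s : ℝ => v + s • e) := by fun_prop
      exact isOpen_compl_singleton.preimage this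
    have hev : deriv^[n] (fun t : ℝ => ∫ r in Ioi (0:ℝ), g (c + r • (v + t • e)) * r ^ j)
        =ᶠ[𝓝 t]
        (fun s : ℝ => ∫ r in Ioi (0:ℝ), Dm e n g (c + r • (v + s • e)) * r ^ (j + n)) := by
      filter_upwards [hopen.mem_nhds ht] with s hs using ih s hs
    rw [hev.deriv_eq]
    have hd := coreW (Dm e n g) (Dm_contDiff e n g hg) (Dm_hcs e n g hcs) c v e (j + n) t ht
    rw [hd.deriv]
    rfl

lemma iterU (g : E3 → ℝ) (hg : ContDiff ℝ (⊤ : ℕ∞) g) (hcs : HasCompactSupport g)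
    (c a v : E3) (j : ℕ) (m : ℕ) (hv : v ≠ 0) :
    ∀ t : ℝ,
      deriv^[m] (fun t : ℝ => ∫ r in Ioi (0:ℝ), g ((c + t • a) + r • v) * r ^ j) t
        = ∫ r in Ioi (0:ℝ), Dm a m g ((c + t • a) + r • v) * r ^ j := by
  induction m with
  | zero => intro t; simp [Dm]
  | succ n ih =>
    intro t
    rw [Function.iterate_succ_apply']
    have hfun : deriv^[n] (fun t : ℝ => ∫ r in Ioi (0:ℝ), g ((c + t • a) + r • v) * r ^ j)
        = fun s : ℝ => ∫ r in Ioi (0:ℝ), Dm a n g ((c + s • a) + r • v) * r ^ j :=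
      funext fun s => ih s
    rw [hfun]
    have hd := coreU (Dm a n g) (Dm_contDiff a n g hg) (Dm_hcs a n g hcs) c a v j t hv
    rw [hd.deriv]
    rfl

lemma not_diff_right (G : ℝ → ℝ) (C : ℝ) (hC : C ≠ 0) (n : ℕ) (hn : 1 ≤ n)
    (h : ∀ t : ℝ, 0 < t → G t = C * (t ^ n)⁻¹) : ¬ DifferentiableAt ℝ G 0 := by
  intro hd
  have h1 : Tendsto G (𝓝[>] (0:ℝ)) (𝓝 (G 0)) :=
    (hd.continuousAt.tendsto).mono_left nhdsWithin_le_nhds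
  have h2 : Tendsto (fun t : ℝ => C * (t ^ n)⁻¹) (𝓝[>] (0:ℝ)) (𝓝 (G 0)) := by
    apply h1.congr'
    filter_upwards [self_mem_nhdsWithin] with t ht using h t ht
  have h3 : Tendsto (fun t : ℝ => (t ^ n)⁻¹) (𝓝[>] (0:ℝ)) atTop := by
    apply tendsto_inv_nhdsGT_zero.comp
    rw [tendsto_nhdsWithin_iff]
    constructor
    · have := ((continuous_pow n).tendsto (0:ℝ)).mono_left (nhdsWithin_le_nhds (s := Ioi 0))
      simpa [zero_pow (by omega : n ≠ 0)] using this
    · filter_upwards [self_mem_nhdsWithin] with t ht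
      exact pow_pos (show (0:ℝ) < t from ht) n
  rcases hC.lt_or_gt with hneg | hpos
  · have h4 : Tendsto (fun t : ℝ => C * (t ^ n)⁻¹) (𝓝[>] (0:ℝ)) atBot :=
      h3.const_mul_atTop_of_neg hneg
    exact not_tendsto_nhds_of_tendsto_atBot h4 _ h2
  · have h4 : Tendsto (fun t : ℝ => C * (t ^ n)⁻¹) (𝓝[>] (0:ℝ)) atTop :=
      h3.const_mul_atTop hpos
    exact not_tendsto_nhds_of_tendsto_atTop h4 _ h2

lemma deg (f : E3 → ℝ) (hg : ContDiff ℝ (⊤ : ℕ∞) f) (hcs : HasCompactSupport f)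
    (c e : E3) (he : e ≠ 0) (m : ℕ) :
    deriv^[m] (fun t : ℝ => ∫ r in Ioi (0:ℝ), f (c + r • ((0:E3) + t • e)) * r ^ 1) 0 = 0 := by
  set F := fun t : ℝ => ∫ r in Ioi (0:ℝ), f (c + r • ((0:E3) + t • e)) * r ^ 1 with hFdef
  induction m with
  | zero =>
    simp only [Function.iterate_zero, id_eq]
    have h1 : (fun r : ℝ => f (c + r • ((0:E3) + (0:ℝ) • e)) * r ^ 1)
        = fun r : ℝ => f c * r ^ 1 := by
      funext r; congr 2; module
    show (∫ r in Ioi (0:ℝ), f (c + r • ((0:E3) + (0:ℝ) • e)) * r ^ 1) = 0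
    rw [h1]
    exact integral_const_mul_pow_Ioi (f c) 1 le_rfl
  | succ n ih =>
    rw [Function.iterate_succ_apply']
    set Cp : ℝ := ∫ s in Ioi (0:ℝ), Dm e n f (c + s • e) * s ^ (1 + n) with hCp
    set Cm : ℝ := ∫ s in Ioi (0:ℝ), Dm e n f (c + (-s) • e) * s ^ (1 + n) with hCm
    have hright : ∀ t : ℝ, 0 < t → deriv^[n] F t = Cp * (t ^ (n + 2))⁻¹ := by
      intro t ht
      have hnd : (0:E3) + t • e ≠ 0 := by
        rw [zero_add]; exact smul_ne_zero ht.ne' he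
      have h1 := iterW f hg hcs c 0 e 1 n t hnd
      rw [hFdef, h1]
      have h2 : (fun r : ℝ => Dm e n f (c + r • ((0:E3) + t • e)) * r ^ (1 + n))
          = fun r : ℝ => (t ^ (1 + n))⁻¹ *
              ((fun s : ℝ => Dm e n f (c + s • e) * s ^ (1 + n)) (t * r)) := by
        funext r
        have harg : c + r • ((0:E3) + t • e) = c + (t * r) • e := by module
        rw [harg]
        simp only
        rw [mul_pow]
        field_simp
      rw [h2, MeasureTheory.integral_const_mul,
        integral_comp_mul_left_Ioi (fun s : ℝ => Dm e n f (c + s • e) * s ^ (1 + n)) 0 ht,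
        mul_zero, smul_eq_mul, ← hCp]
      rw [show n + 2 = (1 + n) + 1 by omega, pow_succ]
      field_simp
    have hleft : ∀ t : ℝ, t < 0 → deriv^[n] F t = Cm * ((-t) ^ (n + 2))⁻¹ := by
      intro t ht
      have hnd : (0:E3) + t • e ≠ 0 := by
        rw [zero_add]; exact smul_ne_zero ht.ne he
      have h1 := iterW f hg hcs c 0 e 1 n t hnd
      rw [hFdef, h1]
      have hb : (0:ℝ) < -t := by linarith
      have h2 : (fun r : ℝ => Dm e n f (c + r • ((0:E3) + t • e)) * r ^ (1 + n))
          = fun r : ℝ => ((-t) ^ (1 + n))⁻¹ *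
              ((fun s : ℝ => Dm e n f (c + (-s) • e) * s ^ (1 + n)) ((-t) * r)) := by
        funext r
        have harg : c + r • ((0:E3) + t • e) = c + (-(-t * r)) • e := by module
        rw [harg]
        simp only
        rw [mul_pow]
        have hne : ((-t) ^ (1 + n) : ℝ) ≠ 0 := pow_ne_zero _ hb.ne'
        field_simp
      rw [h2, MeasureTheory.integral_const_mul,
        integral_comp_mul_left_Ioi (fun s : ℝ => Dm e n f (c + (-s) • e) * s ^ (1 + n)) 0 hb,
        mul_zero, smul_eq_mul, ← hCm]
      rw [show n + 2 = (1 + n) + 1 by omega, pow_succ]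
      have hne : ((-t) ^ (1 + n) : ℝ) ≠ 0 := pow_ne_zero _ hb.ne'
      field_simp
    by_cases hCp0 : Cp = 0
    · by_cases hCm0 : Cm = 0
      · have hzero : deriv^[n] F = fun _ : ℝ => (0:ℝ) := by
          funext t
          rcases lt_trichotomy t 0 with h | h | h
          · rw [hleft t h, hCm0, zero_mul]
          · rw [h]; exact ih
          · rw [hright t h, hCp0, zero_mul]
        rw [hzero]
        exact deriv_const 0 0
      · apply deriv_zero_of_not_differentiableAt
        intro hd
        have hneg : DifferentiableAt ℝ (fun t : ℝ => deriv^[n] F (-t)) 0 := by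
          have h1 : DifferentiableAt ℝ (fun t : ℝ => -t) 0 := differentiable_neg.differentiableAt
          have h2 : DifferentiableAt ℝ (deriv^[n] F) (-(0:ℝ)) := by rwa [neg_zero]
          exact h2.comp 0 h1
        apply not_diff_right (fun t : ℝ => deriv^[n] F (-t)) Cm hCm0 (n + 2) (by omega)
          ?_ hneg
        intro t ht
        show deriv^[n] F (-t) = Cm * (t ^ (n + 2))⁻¹
        rw [hleft (-t) (by linarith), neg_neg]
    · apply deriv_zero_of_not_differentiableAt
      exact not_diff_right (deriv^[n] F) Cp hCp0 (n + 2) (by omega) hright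

/-- `∂_{w₁}^{k−1} P₁ f(u, w) = ∂_{u₁}^{k−1} P_k f(u, w)` for `u = (u₁,0,0)`. -/
theorem deriv_w_rayT_eq_deriv_u (f : EuclideanSpace ℝ (Fin 3) → ℝ)
    (hf : ContDiff ℝ (⊤ : ℕ∞) f) (hsupp : HasCompactSupport f)
    (k : ℕ) (hk : 1 ≤ k) (u₁ : ℝ) (w : EuclideanSpace ℝ (Fin 3)) :
    deriv^[k - 1] (fun t => rayT 1 f (pt u₁ 0 0) (pt t (w 1) (w 2))) (w 0)
      = deriv^[k - 1] (fun t => rayT k f (pt t 0 0) w) u₁ := by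

  by_cases hw : w = 0
  · have hw0 : w 0 = 0 := by rw [hw]; rfl
    have hw1 : w 1 = 0 := by rw [hw]; rfl
    have hw2 : w 2 = 0 := by rw [hw]; rfl
    have hR : (fun t : ℝ => rayT k f (pt t 0 0) w) = fun _ : ℝ => (0:ℝ) := by
      funext t
      rw [hw]
      show (∫ r in Ioi (0:ℝ), f (pt t 0 0 + r • (0:E3)) * r ^ k) = 0
      simp only [smul_zero, add_zero]
      exact integral_const_mul_pow_Ioi _ k hk
    have hL : (fun t : ℝ => rayT 1 f (pt u₁ 0 0) (pt t (w 1) (w 2)))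
        = fun t : ℝ => ∫ r in Ioi (0:ℝ),
            f (pt u₁ 0 0 + r • ((0:E3) + t • pt 1 0 0)) * r ^ 1 := by
      funext t
      rw [hw1, hw2]
      show (∫ r in Ioi (0:ℝ), f (pt u₁ 0 0 + r • pt t 0 0) * r ^ 1) = _
      congr 1; funext r
      rw [pt_smul t, zero_add]
    rw [hR, hL, hw0, iterate_deriv_zero]
    exact deg f hf hsupp (pt u₁ 0 0) (pt 1 0 0) pt_e_ne (k - 1)
  · have hptd : ∀ t : ℝ, pt t (w 1) (w 2) = pt 0 (w 1) (w 2) + t • pt 1 0 0 :=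
      fun t => pt_decomp t (w 1) (w 2)
    have hww : pt 0 (w 1) (w 2) + (w 0) • pt 1 0 0 = w := by
      rw [← hptd]; exact pt_self w
    have hL : (fun t : ℝ => rayT 1 f (pt u₁ 0 0) (pt t (w 1) (w 2)))
        = fun t : ℝ => ∫ r in Ioi (0:ℝ),
            f (pt u₁ 0 0 + r • (pt 0 (w 1) (w 2) + t • pt 1 0 0)) * r ^ 1 := by
      funext t
      show (∫ r in Ioi (0:ℝ), f (pt u₁ 0 0 + r • pt t (w 1) (w 2)) * r ^ 1) = _
      rw [hptd]
    have hRf : (fun t : ℝ => rayT k f (pt t 0 0) w)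
        = fun t : ℝ => ∫ r in Ioi (0:ℝ),
            f (((0:E3) + t • pt 1 0 0) + r • w) * r ^ k := by
      funext t
      show (∫ r in Ioi (0:ℝ), f (pt t 0 0 + r • w) * r ^ k) = _
      congr 1; funext r
      rw [pt_smul t, zero_add]
    have hnd : pt 0 (w 1) (w 2) + (w 0) • pt 1 0 0 ≠ 0 := by rw [hww]; exact hw
    rw [hL, hRf,
      iterW f hf hsupp (pt u₁ 0 0) (pt 0 (w 1) (w 2)) (pt 1 0 0) 1 (k - 1) (w 0) hnd,
      iterU f hf hsupp 0 (pt 1 0 0) w k (k - 1) hw u₁]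
    rw [hww]
    have h1 : 1 + (k - 1) = k := by omega
    rw [h1]
    congr 1; funext r
    congr 2
    rw [zero_add, ← pt_smul u₁]
end
end

section
/- Support condition for invertibility of the restricted geometry: for every point x in the simplex K = {x ∈ [0,1]³ : x₁ + x₂ + x₃ ≤ 1, x₁, x₂, x₃ ≥ 0} and every plane H ⊂ ℝ³ passing through x, the plane H intersects the set Ξ = Ξ₁ ∪ Ξ₂ ∪ Ξ₃, where Ξ₁ = {(t,0,0) : t ∈ [0,1]}, Ξ₂ = {(0,t,0) : t ∈ [0,1]}, Ξ₃ = {(0,0,t) : t ∈ [0,1]}. -/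
open MeasureTheory Metric Set Filter Real

noncomputable section

/-! `K` is the convex hull of `0` and the three unit vectors, all of which lie in `Ξ`. A linear
functional `⟪·, n⟫` therefore takes its value at `x ∈ K` between its values at two of these
vertices, and since `Ξ` is a union of segments through `0`, hence connected, the intermediate
value theorem finds a point of `Ξ` where the functional takes that same value. -/

theorem exists_apply_eq_of_mem_convexHull {E : Type*} [AddCommGroup E] [Module ℝ E]
    [TopologicalSpace E] (f : E →L[ℝ] ℝ) {s t : Set E} (ht : IsPreconnected t) (hst : s ⊆ t)
    {x : E} (hx : x ∈ convexHull ℝ s) : ∃ y ∈ t, f y = f x := by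
  obtain ⟨a, ha, hax⟩ :=
    (f.toLinearMap.concaveOn convex_univ).exists_le_of_mem_convexHull (subset_univ s) hx
  obtain ⟨b, hb, hxb⟩ :=
    (f.toLinearMap.convexOn convex_univ).exists_ge_of_mem_convexHull (subset_univ s) hx
  exact ht.intermediate_value (hst ha) (hst hb) f.continuous.continuousOn ⟨hax, hxb⟩

lemma smul_pt (t a b c : ℝ) : t • pt a b c = pt (t * a) (t * b) (t * c) := by
  ext i; fin_cases i <;> simp [pt]

lemma setOf_exists_eq_smul_eq_segment {E : Type*} [AddCommGroup E] [Module ℝ E] (v : E) :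
    {y | ∃ t ∈ Icc (0 : ℝ) 1, y = t • v} = segment ℝ 0 v := by
  rw [segment_eq_image]
  ext y
  simp [eq_comm]

lemma Xi_eq_union_segment :
    Xi = segment ℝ 0 (pt 1 0 0) ∪ segment ℝ 0 (pt 0 1 0) ∪ segment ℝ 0 (pt 0 0 1) := by
  simp only [Xi, ← setOf_exists_eq_smul_eq_segment, smul_pt, mul_zero, mul_one]

lemma starConvex_Xi : StarConvex ℝ 0 Xi := by
  have hseg (v : EuclideanSpace ℝ (Fin 3)) : StarConvex ℝ 0 (segment ℝ 0 v) :=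
    (convex_segment 0 v).starConvex (left_mem_segment ℝ 0 v)
  rw [Xi_eq_union_segment]
  exact ((hseg _).union (hseg _)).union (hseg _)

lemma vertices_subset_Xi : {0, pt 1 0 0, pt 0 1 0, pt 0 0 1} ⊆ Xi := by
  simp [insert_subset_iff, Xi_eq_union_segment, left_mem_segment, right_mem_segment]

lemma isPreconnected_Xi : IsPreconnected Xi :=
  (starConvex_Xi.isPathConnected (vertices_subset_Xi (mem_insert 0 _))).isConnected.isPreconnected

lemma simplexK_subset_convexHull :
    simplexK ⊆ convexHull ℝ {0, pt 1 0 0, pt 0 1 0, pt 0 0 1} := by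
  rintro x ⟨hx, hsum⟩
  have hx_eq : x = ∑ i, ![1 - (x 0 + x 1 + x 2), x 0, x 1, x 2] i •
      ![0, pt 1 0 0, pt 0 1 0, pt 0 0 1] i := by
    ext i; fin_cases i <;> simp [Fin.sum_univ_four, pt]
  rw [hx_eq]
  refine (convex_convexHull ℝ _).sum_mem (fun i _ => ?_) ?_
    (fun i _ => subset_convexHull ℝ _ ?_)
  · fin_cases i <;> simp [(hx _).1, hsum]
  · simp only [Fin.sum_univ_four, Matrix.cons_val_zero, Matrix.cons_val_one, Matrix.cons_val]
    ring
  · fin_cases i <;> simp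

theorem plane_through_simplex_meets_Xi_general (x : EuclideanSpace ℝ (Fin 3))
    (hx : x ∈ simplexK) (n : EuclideanSpace ℝ (Fin 3)) :
    ∃ y ∈ Xi, (inner ℝ (y - x) n : ℝ) = 0 := by
  obtain ⟨y, hy, hyx⟩ := exists_apply_eq_of_mem_convexHull (innerSL ℝ n) isPreconnected_Xi
    vertices_subset_Xi (simplexK_subset_convexHull hx)
  refine ⟨y, hy, ?_⟩
  rw [inner_sub_left, sub_eq_zero, real_inner_comm n y, real_inner_comm n x]
  exact hyx

/-- every plane through a point of the simplex `K` meets the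
vertex set `Ξ`. -/
theorem plane_through_simplex_meets_Xi (x : EuclideanSpace ℝ (Fin 3))
    (hx : x ∈ simplexK) (n : EuclideanSpace ℝ (Fin 3)) (hn : n ≠ 0) :
    ∃ y ∈ Xi, (inner ℝ (y - x) n : ℝ) = 0 :=
  plane_through_simplex_meets_Xi_general x hx n
end
end

section
/- For any point x in the open simplex {x : x₁, x₂, x₃ > 0, x₁+x₂+x₃ < 1} and any unit vector n ∈ S², the set Ξ ∩ {y ∈ ℝ³ : (x − y)·n = 0} is nonempty, where Ξ is the union of the three unit coordinate segments; hence a choice function Λ(x, n) picking a point of this intersection exists. -/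
open MeasureTheory Metric Set Filter Real

noncomputable section

/-!
Along the segment of `Ξ` on the `i`-th axis, `⟪y, n⟫` runs through all values `t * n i`,
`t ∈ [0, 1]`. The value `⟪x, n⟫ = ∑ x i * n i` is a combination of the `n i` with nonnegative
weights of total at most one, so (up to the sign of `n`) it lies between `0` and `max n i`,
and is therefore such a value for the index `i` where `n` is largest.
-/

theorem exists_mul_eq_sum_mul_of_nonneg {ι : Type*} [Fintype ι] [Nonempty ι] (a w : ι → ℝ)
    (hw : ∀ i, 0 ≤ w i) (hw1 : ∑ i, w i ≤ 1) (hs : 0 ≤ ∑ i, w i * a i) :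
    ∃ i, ∃ t ∈ Icc (0 : ℝ) 1, t * a i = ∑ j, w j * a j := by
  rcases hs.eq_or_lt with hs | hs
  · exact ⟨Classical.arbitrary ι, 0, left_mem_Icc.2 zero_le_one, by rw [← hs, zero_mul]⟩
  obtain ⟨i, -, hi⟩ := Finset.exists_max_image Finset.univ a Finset.univ_nonempty
  have hle : ∑ j, w j * a j ≤ (∑ j, w j) * a i := by
    rw [Finset.sum_mul]
    exact Finset.sum_le_sum fun j _ => mul_le_mul_of_nonneg_left (hi j (Finset.mem_univ j)) (hw j)
  have hai : 0 < a i := pos_of_mul_pos_right (hs.trans_le hle) (Finset.sum_nonneg fun j _ => hw j)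
  have hs_le : ∑ j, w j * a j ≤ a i := hle.trans (mul_le_of_le_one_left hai.le hw1)
  exact ⟨i, (∑ j, w j * a j) / a i, ⟨by positivity, (div_le_one hai).2 hs_le⟩,
    div_mul_cancel₀ _ hai.ne'⟩

theorem exists_mul_eq_sum_mul {ι : Type*} [Fintype ι] [Nonempty ι] (a w : ι → ℝ)
    (hw : ∀ i, 0 ≤ w i) (hw1 : ∑ i, w i ≤ 1) :
    ∃ i, ∃ t ∈ Icc (0 : ℝ) 1, t * a i = ∑ j, w j * a j := by
  rcases le_total 0 (∑ i, w i * a i) with hs | hs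
  · exact exists_mul_eq_sum_mul_of_nonneg a w hw hw1 hs
  · obtain ⟨i, t, ht, hti⟩ := exists_mul_eq_sum_mul_of_nonneg (-a) w hw hw1
      (by simpa only [Pi.neg_apply, mul_neg, Finset.sum_neg_distrib, neg_nonneg] using hs)
    refine ⟨i, t, ht, ?_⟩
    simpa only [Pi.neg_apply, mul_neg, Finset.sum_neg_distrib, neg_inj] using hti

theorem exists_mem_Xi_inner_eq (n : EuclideanSpace ℝ (Fin 3)) (i : Fin 3) {t : ℝ}
    (ht : t ∈ Icc (0 : ℝ) 1) : ∃ y ∈ Xi, inner ℝ y n = t * n i := by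
  fin_cases i
  · refine ⟨pt t 0 0, Or.inl (Or.inl ⟨t, ht, rfl⟩), ?_⟩
    simp [pt, PiLp.inner_apply, Fin.sum_univ_three, mul_comm]
  · refine ⟨pt 0 t 0, Or.inl (Or.inr ⟨t, ht, rfl⟩), ?_⟩
    simp [pt, PiLp.inner_apply, Fin.sum_univ_three, mul_comm]
  · refine ⟨pt 0 0 t, Or.inr ⟨t, ht, rfl⟩, ?_⟩
    simp [pt, PiLp.inner_apply, Fin.sum_univ_three, mul_comm]

theorem Xi_inter_plane_nonempty_general (x : EuclideanSpace ℝ (Fin 3))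
    (hx : 0 < x 0 ∧ 0 < x 1 ∧ 0 < x 2 ∧ x 0 + x 1 + x 2 < 1)
    (n : EuclideanSpace ℝ (Fin 3)) :
    (Xi ∩ {y : EuclideanSpace ℝ (Fin 3) | (inner ℝ (x - y) n : ℝ) = 0}).Nonempty := by
  obtain ⟨hx0, hx1, hx2, hxs⟩ := hx
  have hw : ∀ j, 0 ≤ x j := by
    intro j; fin_cases j
    exacts [hx0.le, hx1.le, hx2.le]
  obtain ⟨i, t, ht, hti⟩ := exists_mul_eq_sum_mul (fun j => n j) (fun j => x j) hw
    (by simpa [Fin.sum_univ_three] using hxs.le)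
  obtain ⟨y, hy, hyn⟩ := exists_mem_Xi_inner_eq n i ht
  refine ⟨y, hy, ?_⟩
  show inner ℝ (x - y) n = 0
  rw [inner_sub_left, hyn, hti, PiLp.inner_apply]
  simp [mul_comm]

/-- for a point of the open simplex and any unit normal `n`, the plane
through `x` with normal `n` meets `Ξ`; hence a choice function `Λ(x, n)` exists. -/
theorem Xi_inter_plane_nonempty (x : EuclideanSpace ℝ (Fin 3))
    (hx : 0 < x 0 ∧ 0 < x 1 ∧ 0 < x 2 ∧ x 0 + x 1 + x 2 < 1)
    (n : EuclideanSpace ℝ (Fin 3)) (hn : ‖n‖ = 1) :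
    (Xi ∩ {y : EuclideanSpace ℝ (Fin 3) | (inner ℝ (x - y) n : ℝ) = 0}).Nonempty :=
  Xi_inter_plane_nonempty_general x hx n
end
end

section
/- If f : ℝ³ → ℝ is continuous, nonnegative, compactly supported, and C_k f(u, β, s) = 0 for all vertices u ∈ Ξ, all admissible axes β and all s ∈ (−1,1) (equivalently P_k f(u, α) = 0 for all u ∈ Ξ and all α ∈ S²), and supp f ⊆ {x ∈ [0,1]³ : x₁+x₂+x₃ ≤ 1}, then f = 0. -/
open MeasureTheory Metric Set Filter Real

noncomputable section

/-!
Look from the vertex `0 ∈ Ξ`. For a unit vector `α`, the integrand `r ↦ f (r • α) * r ^ k`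
of `P_k f(0, α)` is continuous, compactly supported and nonnegative on `(0, ∞)`, so its vanishing
integral forces it to vanish there. Hence `f` is zero on every open ray from the origin, i.e. off
the origin, and by continuity everywhere.
-/

theorem eqOn_zero_of_setIntegral_eq_zero {X : Type*} [TopologicalSpace X] [MeasurableSpace X]
    [OpensMeasurableSpace X] {μ : Measure X} [μ.IsOpenPosMeasure] {g : X → ℝ} {s : Set X}
    (hs : IsOpen s) (hg : ContinuousOn g s) (hnn : ∀ x ∈ s, 0 ≤ g x)
    (hint : IntegrableOn g s μ) (h : ∫ x in s, g x ∂μ = 0) : EqOn g 0 s := by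
  intro x hx
  by_contra hne
  have hopen : IsOpen (Function.support g ∩ s) := by
    rw [inter_comm]
    exact hg.isOpen_inter_preimage hs isOpen_compl_singleton
  have hpos : 0 < ∫ x in s, g x ∂μ :=
    (setIntegral_pos_iff_support_of_nonneg_ae (ae_restrict_of_forall_mem hs.measurableSet hnn)
      hint).mpr (hopen.measure_pos μ ⟨x, hne, hx⟩)
  exact hpos.ne' h

section Rays

variable {E : Type*} [NormedAddCommGroup E] [NormedSpace ℝ E]

theorem HasCompactSupport.comp_ray {f : E → ℝ} (hsupp : HasCompactSupport f) (u : E) {w : E}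
    (hw : w ≠ 0) : HasCompactSupport fun r : ℝ => f (u + r • w) :=
  hsupp.comp_isClosedEmbedding
    ((Homeomorph.addLeft u).isClosedEmbedding.comp (isClosedEmbedding_smul_left hw))

theorem eq_zero_on_ray_of_integral_eq_zero {f : E → ℝ} (hf : Continuous f) (hpos : ∀ x, 0 ≤ f x)
    (hsupp : HasCompactSupport f) (u : E) {w : E} (hw : w ≠ 0) (k : ℕ)
    (h : ∫ r in Ioi (0 : ℝ), f (u + r • w) * r ^ k = 0) {r : ℝ} (hr : 0 < r) :
    f (u + r • w) = 0 := by
  have hcont : Continuous fun r : ℝ => f (u + r • w) * r ^ k := by fun_prop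
  have hint : Integrable fun r : ℝ => f (u + r • w) * r ^ k :=
    hcont.integrable_of_hasCompactSupport (hsupp.comp_ray u hw).mul_right
  have hr0 := eqOn_zero_of_setIntegral_eq_zero isOpen_Ioi hcont.continuousOn
    (fun r hr => mul_nonneg (hpos _) (pow_nonneg (le_of_lt hr) k)) hint.integrableOn h hr
  exact (mul_eq_zero.mp hr0).resolve_right (pow_ne_zero k hr.ne')

theorem eq_zero_of_integral_ray_eq_zero [Nontrivial E] {f : E → ℝ} (hf : Continuous f)
    (hpos : ∀ x, 0 ≤ f x) (hsupp : HasCompactSupport f) (u : E) (k : ℕ)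
    (h : ∀ w : E, ‖w‖ = 1 → ∫ r in Ioi (0 : ℝ), f (u + r • w) * r ^ k = 0) : f = 0 := by
  have hoff : ∀ x ∈ ({u}ᶜ : Set E), f x = 0 := by
    intro x hx
    have hxu : x - u ≠ 0 := sub_ne_zero.mpr hx
    set w := ‖x - u‖⁻¹ • (x - u)
    have hw : ‖w‖ = 1 := norm_smul_inv_norm hxu
    have hw0 : w ≠ 0 := ne_zero_of_norm_ne_zero (by rw [hw]; exact one_ne_zero)
    have hfx := eq_zero_on_ray_of_integral_eq_zero hf hpos hsupp u hw0 k (h w hw)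
      (norm_pos_iff.mpr hxu)
    rwa [smul_inv_smul₀ (norm_ne_zero_iff.mpr hxu), add_sub_cancel] at hfx
  exact hf.ext_on (dense_compl_singleton u) continuous_const hoff

end Rays

theorem zero_mem_Xi : (0 : EuclideanSpace ℝ (Fin 3)) ∈ Xi := by
  refine Or.inl (Or.inl ⟨0, left_mem_Icc.mpr zero_le_one, ?_⟩)
  ext i
  fin_cases i <;> simp [pt]

theorem rayT_injective_on_simplex_general (f : EuclideanSpace ℝ (Fin 3) → ℝ)
    (hf : Continuous f) (hpos : ∀ x, 0 ≤ f x) (hsupp : HasCompactSupport f)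
    (k : ℕ)
    (h0 : ∀ u ∈ Xi, ∀ α : EuclideanSpace ℝ (Fin 3), ‖α‖ = 1 → rayT k f u α = 0) :
    f = 0 :=
  eq_zero_of_integral_ray_eq_zero hf hpos hsupp 0 k (h0 0 zero_mem_Xi)

/-- uniqueness: a nonnegative continuous function supported in the
simplex with vanishing ray transforms from all vertices of `Ξ` is identically zero. -/
theorem rayT_injective_on_simplex (f : EuclideanSpace ℝ (Fin 3) → ℝ)
    (hf : Continuous f) (hpos : ∀ x, 0 ≤ f x) (hsupp : HasCompactSupport f)
    (hK : tsupport f ⊆ simplexK) (k : ℕ)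
    (h0 : ∀ u ∈ Xi, ∀ α : EuclideanSpace ℝ (Fin 3), ‖α‖ = 1 → rayT k f u α = 0) :
    f = 0 :=
  rayT_injective_on_simplex_general f hf hpos hsupp k h0
end
end
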